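/- arXiv:1912.01365 — 4 statements merged into one kernel-verified Lean document; each statement's English description precedes it below -/
import Mathlib

section
/- If an FBAS (V,S) has quorum intersection, then its trust graph has a greatest SCC, i.e., an SCC reachable from every other SCC. -/
/-!
Since `V` is finite, some node `c` has an inclusion-minimal reach set; then every node that `c`
reaches reaches `c` back, so the reach set of `c` is an SCC. The reach set of any node is a trust
cluster, hence a quorum, so quorum intersection makes the reach set of a node of any other SCC
meet that of `c`.
-/

open Set

variable {α : Type*}

/-- `(V, S)` is a federated Byzantine agreement system: every node `v ∈ V` has a
nonempty set of slices, each slice containing `v` and consisting of nodes of `V`. -/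
def IsFBAS (V : Set α) (S : α → Set (Set α)) : Prop :=
  ∀ v ∈ V, (S v).Nonempty ∧ ∀ s ∈ S v, v ∈ s ∧ s ⊆ V

/-- A nonempty `Q ⊆ V` is a quorum if every member has a slice contained in `Q`. -/
def IsQuorum (V : Set α) (S : α → Set (Set α)) (Q : Set α) : Prop :=
  Q.Nonempty ∧ Q ⊆ V ∧ ∀ v ∈ Q, ∃ s ∈ S v, s ⊆ Q

/-- Any two quorums have nonempty intersection. -/
def HasQuorumIntersection (V : Set α) (S : α → Set (Set α)) : Prop :=
  ∀ Q₁ Q₂, IsQuorum V S Q₁ → IsQuorum V S Q₂ → (Q₁ ∩ Q₂).Nonempty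

/-- The slice function of the FBAS with the nodes of `D` deleted. -/
def deleteS (S : α → Set (Set α)) (D : Set α) : α → Set (Set α) :=
  fun v => (· \ D) '' S v

/-- `D` is a dispensable set (DSet) of `(V, S)`. -/
def IsDSet (V : Set α) (S : α → Set (Set α)) (D : Set α) : Prop :=
  D ⊆ V ∧ HasQuorumIntersection (V \ D) (deleteS S D) ∧
    (IsQuorum V S (V \ D) ∨ D = V)

/-- `v` is `B`-intact: some DSet contains `B` but not `v`. -/
def Intact (V : Set α) (S : α → Set (Set α)) (B : Set α) (v : α) : Prop :=
  ∃ D, IsDSet V S D ∧ B ⊆ D ∧ v ∉ D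

/-- Edge relation of the trust graph: `u → v` iff `v` lies in some slice of `u`. -/
def trustE (S : α → Set (Set α)) (u v : α) : Prop := ∃ s ∈ S u, v ∈ s

/-- Reachability: reflexive-transitive closure of the edge relation. -/
def Reach (E : α → α → Prop) : α → α → Prop := Relation.ReflTransGen E

/-- `U` is strongly connected: any two of its nodes are mutually reachable. -/
def StronglyConn (E : α → α → Prop) (U : Set α) : Prop :=
  ∀ u ∈ U, ∀ v ∈ U, Reach E u v

/-- `C` is a strongly connected component of the graph on `V`: nonempty,
strongly connected, and no proper superset (within `V`) is strongly connected. -/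
def IsSCC (V : Set α) (E : α → α → Prop) (C : Set α) : Prop :=
  C.Nonempty ∧ C ⊆ V ∧ StronglyConn E C ∧
    ∀ C', C ⊆ C' → C' ⊆ V → StronglyConn E C' → C' ⊆ C

/-- `D` is reachable from `C` (as sets of nodes). -/
def SCCReach (E : α → α → Prop) (C D : Set α) : Prop :=
  ∃ c ∈ C, ∃ d ∈ D, Reach E c d

/-- A trust cluster: a subset of `V` closed under reachability in the trust graph. -/
def TrustCluster (V : Set α) (S : α → Set (Set α)) (Z : Set α) : Prop :=
  Z ⊆ V ∧ ∀ u ∈ Z, ∀ v, Reach (trustE S) u v → v ∈ Z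

/-- Slice function of the symmetric simple FBAS `(V, k)`: the slices of `v` are
all `k`-element subsets of `V` containing `v`. -/
def symS (V : Set α) (k : ℕ) : α → Set (Set α) :=
  fun v => {U | v ∈ U ∧ U ⊆ V ∧ U.ncard = k}

/-- A `B`-quorum: nonempty `Q ⊆ V` such that every member outside `B` has a slice in `Q`. -/
def IsBQuorum (V : Set α) (S : α → Set (Set α)) (B : Set α) (Q : Set α) : Prop :=
  Q.Nonempty ∧ Q ⊆ V ∧ ∀ v ∈ Q \ B, ∃ s ∈ S v, s ⊆ Q

/-- A `B`-intact set. -/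
def IsBIntactSet (V : Set α) (S : α → Set (Set α)) (B U : Set α) : Prop :=
  U ⊆ V \ B ∧ (U = ∅ ∨ IsBQuorum V S B U) ∧
    ∀ Q Q', IsBQuorum V S B Q → IsBQuorum V S B Q' →
      (Q ∩ U).Nonempty → (Q' ∩ U).Nonempty → (Q ∩ Q' ∩ U).Nonempty

/-- The `B`-subslice property. -/
def SubsliceProp (V : Set α) (S : α → Set (Set α)) (B : Set α) : Prop :=
  ∀ v ∈ V \ B, ∀ s ∈ S v, ∀ u ∈ s \ B, ∃ s' ∈ S u, s' ⊆ s

/-- `(V, S)` is resilient against `m` ill-behaved nodes: for every set `B` of at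
most `m` nodes, every node outside `B` is `B`-intact. -/
def Resilient (V : Set α) (S : α → Set (Set α)) (m : ℕ) : Prop :=
  ∀ B ⊆ V, B.ncard ≤ m → ∀ v ∈ V \ B, Intact V S B v

def reachSet (E : α → α → Prop) (v : α) : Set α := {w | Reach E v w}

/-- `c` lies in a sink component of the graph. -/
def IsTerminal (E : α → α → Prop) (c : α) : Prop := ∀ w, Reach E c w → Reach E w c

section Graph

variable {E : α → α → Prop} {V : Set α}

lemma reachSet_subset_of_mem {v w : α} (h : w ∈ reachSet E v) : reachSet E w ⊆ reachSet E v :=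
  fun _ => Relation.ReflTransGen.trans h

lemma reachSet_subset (hV : ∀ u ∈ V, ∀ v, E u v → v ∈ V) {c : α} (hc : c ∈ V) :
    reachSet E c ⊆ V := by
  intro w hw
  induction hw with
  | refl => exact hc
  | tail _ hedge ih => exact hV _ ih _ hedge

lemma exists_isTerminal (hV : ∀ u ∈ V, ∀ v, E u v → v ∈ V) (hfin : V.Finite)
    (hne : V.Nonempty) : ∃ c ∈ V, IsTerminal E c := by
  obtain ⟨c, hc, hmin⟩ := hfin.exists_minimalFor (reachSet E) V hne
  refine ⟨c, hc, fun w hw => ?_⟩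
  have hwc : reachSet E w ⊆ reachSet E c := reachSet_subset_of_mem hw
  exact hmin (reachSet_subset hV hc hw) hwc Relation.ReflTransGen.refl

lemma IsTerminal.isSCC_reachSet (hV : ∀ u ∈ V, ∀ v, E u v → v ∈ V) {c : α} (hc : c ∈ V)
    (hterm : IsTerminal E c) : IsSCC V E (reachSet E c) := by
  refine ⟨⟨c, Relation.ReflTransGen.refl⟩, reachSet_subset hV hc, ?_, ?_⟩
  · intro u hu v hv
    exact Relation.ReflTransGen.trans (hterm u hu) hv
  · intro C' hsub _ hconn w hw
    exact hconn c (hsub Relation.ReflTransGen.refl) w hw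

end Graph

section Trust

variable {V : Set α} {S : α → Set (Set α)}

lemma IsFBAS.trustE_mem (hF : IsFBAS V S) : ∀ u ∈ V, ∀ v, trustE S u v → v ∈ V := by
  rintro u hu v ⟨s, hs, hvs⟩
  exact ((hF u hu).2 s hs).2 hvs

lemma IsFBAS.trustCluster_reachSet (hF : IsFBAS V S) {v : α} (hv : v ∈ V) :
    TrustCluster V S (reachSet (trustE S) v) :=
  ⟨reachSet_subset hF.trustE_mem hv, fun _ hu _ => Relation.ReflTransGen.trans hu⟩

lemma TrustCluster.isQuorum (hF : IsFBAS V S) {Z : Set α} (hZ : TrustCluster V S Z)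
    (hne : Z.Nonempty) : IsQuorum V S Z := by
  refine ⟨hne, hZ.1, fun v hv => ?_⟩
  obtain ⟨s, hs⟩ := (hF v (hZ.1 hv)).1
  exact ⟨s, hs, fun w hw => hZ.2 v hv w (Relation.ReflTransGen.single ⟨s, hs, hw⟩)⟩

lemma IsFBAS.isQuorum_reachSet (hF : IsFBAS V S) {v : α} (hv : v ∈ V) :
    IsQuorum V S (reachSet (trustE S) v) :=
  (hF.trustCluster_reachSet hv).isQuorum hF ⟨v, Relation.ReflTransGen.refl⟩

end Trust

/-- If an FBAS has quorum intersection, its trust graph has a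
greatest SCC, i.e., an SCC reachable from every other SCC. -/
theorem greatest_scc_exists (V : Set α) (S : α → Set (Set α))
    (hF : IsFBAS V S) (hfin : V.Finite) (hne : V.Nonempty)
    (hQI : HasQuorumIntersection V S) :
    ∃ C, IsSCC V (trustE S) C ∧
      ∀ C', IsSCC V (trustE S) C' → C' ≠ C → SCCReach (trustE S) C' C := by
  obtain ⟨c, hc, hterm⟩ := exists_isTerminal hF.trustE_mem hfin hne
  refine ⟨reachSet (trustE S) c, hterm.isSCC_reachSet hF.trustE_mem hc, fun C' hC' _ => ?_⟩
  obtain ⟨c', hc'⟩ := hC'.1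
  obtain ⟨x, hx', hx⟩ := hQI _ _ (hF.isQuorum_reachSet (hC'.2.1 hc')) (hF.isQuorum_reachSet hc)
  exact ⟨c', hc', x, hx, hx'⟩
end

section
/- In a symmetric simple FBAS (V,k), a set D ⊆ V is a DSet if and only if (1) D = V, or (2) k = 1 and |D| = |V| − 1, or (3) |D| ≤ min(|V| − k, 2k − |V| − 1). -/
/-!
Quorums of `(V, k)^D` are exactly the subsets of `V \ D` of size at least `max 1 (k - |D|)`, so
`(V, k)^D` has quorum intersection iff `V \ D` cannot hold two disjoint such sets, i.e.
`|V \ D| < 2 * max 1 (k - |D|)`. Together with "`V \ D` is a quorum iff `k ≤ |V| - |D|`" this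
turns the DSet condition into integer arithmetic in `|V|`, `|D|` and `k`.
-/

open Set

variable {α : Type*}

lemma deleteS_empty (S : α → Set (Set α)) : deleteS S ∅ = S := by
  funext v
  simp [deleteS]

lemma forall_inter_nonempty_iff_ncard_lt_two_mul {W : Set α} (hW : W.Finite) (t : ℕ) :
    (∀ Q₁ Q₂ : Set α, Q₁ ⊆ W ∧ t ≤ Q₁.ncard → Q₂ ⊆ W ∧ t ≤ Q₂.ncard →
      (Q₁ ∩ Q₂).Nonempty) ↔ W.ncard < 2 * t := by
  constructor
  · intro h
    by_contra! hW2
    obtain ⟨Q₁, hQ₁W, hQ₁⟩ := exists_subset_card_eq (s := W) (n := t) (by omega)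
    obtain ⟨Q₂, hQ₂W, hQ₂⟩ := exists_subset_card_eq (s := W \ Q₁) (n := t)
      (by rw [ncard_sdiff hQ₁W (hW.subset hQ₁W)]; omega)
    obtain ⟨x, hx₁, hx₂⟩ := h Q₁ Q₂ ⟨hQ₁W, hQ₁.ge⟩ ⟨hQ₂W.trans sdiff_subset, hQ₂.ge⟩
    exact (hQ₂W hx₂).2 hx₁
  · rintro hW2 Q₁ Q₂ ⟨hQ₁W, hQ₁⟩ ⟨hQ₂W, hQ₂⟩
    have hQ₁f := hW.subset hQ₁W
    have hQ₂f := hW.subset hQ₂W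
    have hunion := ncard_union_add_ncard_inter Q₁ Q₂ hQ₁f hQ₂f
    have hle : (Q₁ ∪ Q₂).ncard ≤ W.ncard := ncard_le_ncard (union_subset hQ₁W hQ₂W) hW
    exact (ncard_pos (hQ₁f.inter_of_left Q₂)).1 (by omega)

lemma isQuorum_deleteS_symS_iff {V D Q : Set α} {k : ℕ} (hV : V.Finite) (hD : D ⊆ V)
    (hk : 1 ≤ k) :
    IsQuorum (V \ D) (deleteS (symS V k) D) Q ↔
      Q ⊆ V \ D ∧ max 1 (k - D.ncard) ≤ Q.ncard := by
  have hQf : Q ⊆ V \ D → Q.Finite := fun hQ => hV.subset (hQ.trans sdiff_subset)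
  constructor
  · rintro ⟨hne, hQ, hslice⟩
    obtain ⟨v, hv⟩ := hne
    obtain ⟨_, ⟨s, ⟨-, -, rfl⟩, rfl⟩, hsQ⟩ := hslice v hv
    refine ⟨hQ, max_le ((ncard_pos (hQf hQ)).2 ⟨v, hv⟩) ?_⟩
    calc s.ncard - D.ncard ≤ (s \ D).ncard := le_ncard_sdiff D s (hV.subset hD)
      _ ≤ Q.ncard := ncard_le_ncard hsQ (hQf hQ)
  · rintro ⟨hQ, hcard⟩
    refine ⟨nonempty_of_ncard_ne_zero (by omega), hQ, fun v hv => ?_⟩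
    have hQD : Q ∪ D ⊆ V := union_subset (hQ.trans sdiff_subset) hD
    have hcardQD : (Q ∪ D).ncard = Q.ncard + D.ncard :=
      ncard_union_eq (disjoint_of_subset_left hQ disjoint_sdiff_left) (hQf hQ) (hV.subset hD)
    -- a `k`-slice of `v` inside `Q ∪ D` loses only nodes of `D` on deletion
    obtain ⟨s, hvs, hsQD, hs⟩ := exists_subsuperset_card_eq
      (singleton_subset_iff.2 (mem_union_left D hv)) (by simpa using hk) (by omega)
    refine ⟨s \ D, ⟨s, ⟨singleton_subset_iff.1 hvs, hsQD.trans hQD, hs⟩, rfl⟩, ?_⟩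
    rintro x ⟨hxs, hxD⟩
    exact (hsQD hxs).resolve_right hxD

lemma isQuorum_symS_iff {V Q : Set α} {k : ℕ} (hV : V.Finite) (hk : 1 ≤ k) :
    IsQuorum V (symS V k) Q ↔ Q ⊆ V ∧ k ≤ Q.ncard := by
  simpa [deleteS_empty, max_eq_right hk] using
    isQuorum_deleteS_symS_iff (Q := Q) hV (empty_subset V) hk

lemma hasQuorumIntersection_deleteS_symS_iff {V D : Set α} {k : ℕ} (hV : V.Finite)
    (hD : D ⊆ V) (hk : 1 ≤ k) :
    HasQuorumIntersection (V \ D) (deleteS (symS V k) D) ↔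
      (V \ D).ncard < 2 * max 1 (k - D.ncard) := by
  simp only [HasQuorumIntersection, isQuorum_deleteS_symS_iff hV hD hk]
  exact forall_inter_nonempty_iff_ncard_lt_two_mul (hV.subset sdiff_subset) _

theorem symmetric_simple_dsets_general (V : Set α) (k : ℕ) (D : Set α)
    (hV : V.Finite) (hk₁ : 1 ≤ k) (hD : D ⊆ V) :
    IsDSet V (symS V k) D ↔
      (D = V ∨ (k = 1 ∧ D.ncard = V.ncard - 1) ∨
        (D.ncard : ℤ) ≤ min ((V.ncard : ℤ) - k) (2 * k - V.ncard - 1)) := by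
  have hDV : D = V ↔ D.ncard = V.ncard :=
    ⟨fun h => h ▸ rfl, fun h => eq_of_subset_of_ncard_le hD h.ge hV⟩
  have hdn : D.ncard ≤ V.ncard := ncard_le_ncard hD hV
  have hVD : (V \ D).ncard = V.ncard - D.ncard := ncard_sdiff hD (hV.subset hD)
  simp only [IsDSet, hD, true_and, hasQuorumIntersection_deleteS_symS_iff hV hD hk₁,
    isQuorum_symS_iff hV hk₁, sdiff_subset, hVD, hDV]
  omega

/-- DSets of a symmetric simple FBAS `(V, k)`:
`D` is a DSet iff `D = V`, or `k = 1` and `|D| = |V| - 1`, or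
`|D| ≤ min (|V| - k) (2k - |V| - 1)` (in the integers). -/
theorem symmetric_simple_dsets (V : Set α) (k : ℕ) (D : Set α)
    (hV : V.Finite) (hk₁ : 1 ≤ k) (hk₂ : k ≤ V.ncard) (hD : D ⊆ V) :
    IsDSet V (symS V k) D ↔
      (D = V ∨ (k = 1 ∧ D.ncard = V.ncard - 1) ∨
        (D.ncard : ℤ) ≤ min ((V.ncard : ℤ) - k) (2 * k - V.ncard - 1)) :=
  symmetric_simple_dsets_general V k D hV hk₁ hD
end

section
/- Let (V,S) be an FBAS with quorum intersection satisfying the B-subslice property. Then a node v is B-intact if and only if v is contained in a B-intact set. -/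
open Set

variable {α : Type*}

/-!
For `B ⊆ D ⊆ V`, the quorums of the system with `D` deleted are exactly the nonempty traces
`R ∩ (V \ D)` of `B`-quorums `R`: a `B`-quorum restricts to such a quorum, and conversely a quorum
`Q` of the deleted system, together with one slice of each of its nodes, is a `B`-quorum by the
`B`-subslice property. Hence `D` is a DSet if and only if `V \ D` is a `B`-intact set, and a node
is `B`-intact iff it lies in `V \ D` for such a `D`.
-/

section BQuorum

variable {V : Set α} {S : α → Set (Set α)} {B D Q : Set α}

theorem IsQuorum.isBQuorum (hQ : IsQuorum V S Q) : IsBQuorum V S B Q :=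
  ⟨hQ.1, hQ.2.1, fun v hv => hQ.2.2 v hv.1⟩

theorem IsBQuorum.isQuorum (hQ : IsBQuorum V S B Q) (hQB : Disjoint Q B) : IsQuorum V S Q :=
  ⟨hQ.1, hQ.2.1, fun v hv => hQ.2.2 v ⟨hv, disjoint_left.1 hQB hv⟩⟩

theorem IsBQuorum.isQuorum_deleteS_inter (hBD : B ⊆ D) (hQ : IsBQuorum V S B Q)
    (hne : (Q ∩ (V \ D)).Nonempty) : IsQuorum (V \ D) (deleteS S D) (Q ∩ (V \ D)) := by
  refine ⟨hne, inter_subset_right, fun u hu => ?_⟩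
  obtain ⟨s, hs, hsQ⟩ := hQ.2.2 u ⟨hu.1, fun huB => hu.2.2 (hBD huB)⟩
  exact ⟨s \ D, mem_image_of_mem _ hs, fun x hx => ⟨hsQ hx.1, hQ.2.1 (hsQ hx.1), hx.2⟩⟩

theorem isBQuorum_union_biUnion (hF : IsFBAS V S) (hsub : SubsliceProp V S B)
    {T : Set α} (hT : T ⊆ V \ B) (hne : T.Nonempty) {f : α → Set α}
    (hf : ∀ u ∈ T, f u ∈ S u) : IsBQuorum V S B (T ∪ ⋃ u ∈ T, f u) := by
  refine ⟨hne.mono subset_union_left,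
    union_subset (hT.trans sdiff_subset)
      (iUnion₂_subset fun u hu => ((hF u (hT hu).1).2 _ (hf u hu)).2), ?_⟩
  rintro w ⟨hw | hw, hwB⟩
  · exact ⟨f w, hf w hw, subset_union_of_subset_right (subset_biUnion_of_mem hw) _⟩
  · obtain ⟨u, hu, hwu⟩ := mem_iUnion₂.1 hw
    obtain ⟨s, hs, hsf⟩ := hsub u (hT hu) _ (hf u hu) w ⟨hwu, hwB⟩
    exact ⟨s, hs, hsf.trans (subset_union_of_subset_right (subset_biUnion_of_mem hu) _)⟩

theorem IsQuorum.exists_isBQuorum_inter_eq (hF : IsFBAS V S) (hsub : SubsliceProp V S B)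
    (hBD : B ⊆ D) (hQ : IsQuorum (V \ D) (deleteS S D) Q) :
    ∃ R, IsBQuorum V S B R ∧ R ∩ (V \ D) = Q := by
  have hslice : ∀ u ∈ Q, ∃ s ∈ S u, s \ D ⊆ Q := fun u hu => by
    obtain ⟨_, ⟨s, hs, rfl⟩, hsQ⟩ := hQ.2.2 u hu
    exact ⟨s, hs, hsQ⟩
  choose! f hfS hfQ using hslice
  refine ⟨Q ∪ ⋃ u ∈ Q, f u,
    isBQuorum_union_biUnion hF hsub (hQ.2.1.trans (sdiff_subset_sdiff_right hBD)) hQ.1 hfS,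
    subset_antisymm ?_ fun x hx => ⟨Or.inl hx, hQ.2.1 hx⟩⟩
  rintro x ⟨hx | hx, hxVD⟩
  · exact hx
  · obtain ⟨u, hu, hxu⟩ := mem_iUnion₂.1 hx
    exact hfQ u hu ⟨hxu, hxVD.2⟩

theorem hasQuorumIntersection_deleteS_iff (hF : IsFBAS V S) (hsub : SubsliceProp V S B)
    (hBD : B ⊆ D) :
    HasQuorumIntersection (V \ D) (deleteS S D) ↔
      ∀ Q Q', IsBQuorum V S B Q → IsBQuorum V S B Q' →
        (Q ∩ (V \ D)).Nonempty → (Q' ∩ (V \ D)).Nonempty → (Q ∩ Q' ∩ (V \ D)).Nonempty := by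
  constructor
  · intro hQI Q Q' hQ hQ' hne hne'
    obtain ⟨x, hx, hx'⟩ :=
      hQI _ _ (hQ.isQuorum_deleteS_inter hBD hne) (hQ'.isQuorum_deleteS_inter hBD hne')
    exact ⟨x, ⟨hx.1, hx'.1⟩, hx.2⟩
  · intro hint Q Q' hQ hQ'
    obtain ⟨R, hR, rfl⟩ := hQ.exists_isBQuorum_inter_eq hF hsub hBD
    obtain ⟨R', hR', rfl⟩ := hQ'.exists_isBQuorum_inter_eq hF hsub hBD
    obtain ⟨x, ⟨hx, hx'⟩, hxU⟩ := hint R R' hR hR' hQ.1 hQ'.1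
    exact ⟨x, ⟨hx, hxU⟩, hx', hxU⟩

theorem isDSet_iff_isBIntactSet_diff (hF : IsFBAS V S) (hsub : SubsliceProp V S B)
    (hBD : B ⊆ D) (hDV : D ⊆ V) : IsDSet V S D ↔ IsBIntactSet V S B (V \ D) := by
  have hqi := hasQuorumIntersection_deleteS_iff hF hsub hBD
  have hdisj : Disjoint (V \ D) B := disjoint_sdiff_left.mono_right hBD
  constructor
  · rintro ⟨-, hQI, hq | rfl⟩
    · exact ⟨sdiff_subset_sdiff_right hBD, Or.inr hq.isBQuorum, hqi.1 hQI⟩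
    · exact ⟨sdiff_subset_sdiff_right hBD, Or.inl Set.sdiff_self, hqi.1 hQI⟩
  · rintro ⟨-, hempty | hq, hint⟩
    · exact ⟨hDV, hqi.2 hint, Or.inr (subset_antisymm hDV (sdiff_eq_empty.1 hempty))⟩
    · exact ⟨hDV, hqi.2 hint, Or.inl (hq.isQuorum hdisj)⟩

end BQuorum

theorem intact_iff_in_intact_set_general (V : Set α) (S : α → Set (Set α))
    (hF : IsFBAS V S) (B : Set α) (hB : B ⊆ V)
    (hsub : SubsliceProp V S B) (v : α) (hv : v ∈ V) :
    Intact V S B v ↔ ∃ U, IsBIntactSet V S B U ∧ v ∈ U := by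
  constructor
  · rintro ⟨D, hD, hBD, hvD⟩
    exact ⟨V \ D, (isDSet_iff_isBIntactSet_diff hF hsub hBD hD.1).1 hD, hv, hvD⟩
  · rintro ⟨U, hU, hvU⟩
    have hUV : U ⊆ V \ B := hU.1
    have hBD : B ⊆ V \ U := fun b hb => ⟨hB hb, fun hbU => (hUV hbU).2 hb⟩
    refine ⟨V \ U, (isDSet_iff_isBIntactSet_diff hF hsub hBD sdiff_subset).2 ?_, hBD,
      fun hvD => hvD.2 hvU⟩
    rwa [sdiff_sdiff_cancel_left (hUV.trans sdiff_subset)]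

/-- Under the `B`-subslice property (and quorum intersection),
a node is `B`-intact iff it belongs to a `B`-intact set. -/
theorem intact_iff_in_intact_set (V : Set α) (S : α → Set (Set α))
    (hF : IsFBAS V S) (hQI : HasQuorumIntersection V S) (B : Set α) (hB : B ⊆ V)
    (hsub : SubsliceProp V S B) (v : α) (hv : v ∈ V) :
    Intact V S B v ↔ ∃ U, IsBIntactSet V S B U ∧ v ∈ U :=
  intact_iff_in_intact_set_general V S hF B hB hsub v hv
end

section
/- Let Z be a trust cluster of an FBAS (V,S) with quorum intersection and let D be a DSet of (V,S). Then D ∩ Z is a DSet of the restricted FBAS (Z, S|_Z). -/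
open Set

variable {α : Type*}

/-!
Every slice of a node of the trust cluster `Z` lies in `Z`, so deleting `D` or `D ∩ Z` has the
same effect on the slices of nodes of `Z`. Hence every quorum of `(Z, S|_Z)` with `D ∩ Z` deleted
is a quorum of `(V, S)` with `D` deleted, and quorum intersection passes down. If `V \ D` is a
quorum, its trace `Z \ D` on `Z` is a quorum of `(Z, S|_Z)` unless it is empty, i.e. unless
`D ∩ Z = Z`.
-/

theorem IsQuorum.mono_of_eqOn {V V' Q : Set α} {S S' : α → Set (Set α)} (hV : V' ⊆ V)
    (hS : EqOn S' S V') (hQ : IsQuorum V' S' Q) : IsQuorum V S Q := by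
  obtain ⟨hne, hQV, hslice⟩ := hQ
  refine ⟨hne, hQV.trans hV, fun v hv ↦ ?_⟩
  rw [← hS (hQV hv)]
  exact hslice v hv

theorem HasQuorumIntersection.of_isQuorum_imp {V V' : Set α} {S S' : α → Set (Set α)}
    (h : HasQuorumIntersection V S) (hQ : ∀ Q, IsQuorum V' S' Q → IsQuorum V S Q) :
    HasQuorumIntersection V' S' :=
  fun Q₁ Q₂ h₁ h₂ ↦ h Q₁ Q₂ (hQ Q₁ h₁) (hQ Q₂ h₂)

namespace TrustCluster

variable {V Z : Set α} {S : α → Set (Set α)}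

theorem slice_subset (hZ : TrustCluster V S Z) {v : α} (hv : v ∈ Z) {s : Set α}
    (hs : s ∈ S v) : s ⊆ Z :=
  fun w hw ↦ hZ.2 v hv w (Relation.ReflTransGen.single ⟨s, hs, hw⟩)

theorem deleteS_inter_eqOn (hZ : TrustCluster V S Z) (D : Set α) :
    EqOn (deleteS S (D ∩ Z)) (deleteS S D) Z := by
  intro v hv
  refine image_congr fun s hs ↦ ?_
  rw [← sdiff_inter_self_eq_sdiff, inter_assoc, inter_eq_right.2 (hZ.slice_subset hv hs),
    sdiff_inter_self_eq_sdiff]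

theorem inter_isQuorum (hZ : TrustCluster V S Z) {Q : Set α} (hQ : IsQuorum V S Q)
    (hne : (Z ∩ Q).Nonempty) : IsQuorum Z S (Z ∩ Q) := by
  refine ⟨hne, inter_subset_left, fun v hv ↦ ?_⟩
  obtain ⟨s, hs, hsQ⟩ := hQ.2.2 v hv.2
  exact ⟨s, hs, subset_inter (hZ.slice_subset hv.1 hs) hsQ⟩

end TrustCluster

theorem dset_restrict_trust_cluster_general (V : Set α) (S : α → Set (Set α))
    (Z : Set α) (hZ : TrustCluster V S Z) (D : Set α) (hD : IsDSet V S D) :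
    IsDSet Z S (D ∩ Z) := by
  obtain ⟨-, hDQI, hDq⟩ := hD
  have hdiff : Z \ (D ∩ Z) = Z ∩ (V \ D) := by
    rw [sdiff_inter_self_eq_sdiff, ← inter_sdiff_assoc, inter_eq_left.2 hZ.1]
  refine ⟨inter_subset_right, hDQI.of_isQuorum_imp fun Q ↦ IsQuorum.mono_of_eqOn ?_
    fun v hv ↦ hZ.deleteS_inter_eqOn D hv.1, ?_⟩
  · rw [hdiff]
    exact inter_subset_right
  by_cases hZD : Z ⊆ D
  · exact Or.inr (inter_eq_right.2 hZD)
  obtain hq | rfl := hDq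
  · rw [hdiff]
    obtain ⟨x, hxZ, hxD⟩ := not_subset.1 hZD
    exact Or.inl (hZ.inter_isQuorum hq ⟨x, hxZ, hZ.1 hxZ, hxD⟩)
  · exact absurd hZ.1 hZD

/-- If `Z` is a trust cluster of an FBAS with quorum intersection
and `D` is a DSet of `(V, S)`, then `D ∩ Z` is a DSet of `(Z, S|_Z)`. -/
theorem dset_restrict_trust_cluster (V : Set α) (S : α → Set (Set α))
    (hF : IsFBAS V S) (hQI : HasQuorumIntersection V S)
    (Z : Set α) (hZ : TrustCluster V S Z) (D : Set α) (hD : IsDSet V S D) :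
    IsDSet Z S (D ∩ Z) :=
  dset_restrict_trust_cluster_general V S Z hZ D hD
end
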